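/- arXiv:1912.01781 — 8 statements merged into one kernel-verified Lean document; each statement's English description precedes it below -/
import Mathlib

section
/- Let b₁,…,bₙ be linearly independent vectors in Euclidean n-space such that ⟪bᵢ,bⱼ⟫ < 0 for all i ≠ j. Let v₁,…,vₙ be integers, not all zero, and suppose s = Σᵢ vᵢbᵢ is a shortest vector of the lattice generated by b₁,…,bₙ, i.e. ‖s‖ ≤ ‖x‖ for every nonzero lattice vector x. Then either vᵢ ≥ 0 for all i, or vᵢ ≤ 0 for all i. -/
open scoped RealInnerProductSpace

/-!
Replacing the coefficients of `s` by their absolute values gives a nonzero lattice vector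
(linear independence), and it only changes the off-diagonal terms `vᵢ vⱼ ⟪bᵢ, bⱼ⟫` of `‖s‖²`.
Since every `⟪bᵢ, bⱼ⟫` with `i ≠ j` is negative, each such term can only decrease, and it
strictly decreases for a pair of coefficients of opposite signs. So a shortest vector cannot
have coefficients of both signs.
-/

section

variable {ι E : Type*} [Fintype ι] [NormedAddCommGroup E] [InnerProductSpace ℝ E]

theorem real_inner_self_sum_smul (c : ι → ℝ) (b : ι → E) :
    ⟪∑ i, c i • b i, ∑ i, c i • b i⟫ = ∑ i, ∑ j, c i * c j * ⟪b i, b j⟫ := by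
  simp_rw [sum_inner, inner_sum, real_inner_smul_left, real_inner_smul_right, mul_assoc]

theorem norm_sum_abs_smul_lt_of_obtuse (b : ι → E)
    (hobtuse : ∀ i j, i ≠ j → ⟪b i, b j⟫ < 0) (c : ι → ℝ) {i₀ j₀ : ι}
    (hi₀ : c i₀ < 0) (hj₀ : 0 < c j₀) :
    ‖∑ i, |c i| • b i‖ < ‖∑ i, c i • b i‖ := by
  have hle : ∀ i j, |c i| * |c j| * ⟪b i, b j⟫ ≤ c i * c j * ⟪b i, b j⟫ := by
    intro i j
    rcases eq_or_ne i j with rfl | hij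
    · rw [abs_mul_abs_self]
    · rw [← abs_mul]
      exact mul_le_mul_of_nonpos_right (le_abs_self _) (hobtuse i j hij).le
  have hlt : |c i₀| * |c j₀| * ⟪b i₀, b j₀⟫ < c i₀ * c j₀ * ⟪b i₀, b j₀⟫ := by
    refine mul_lt_mul_of_neg_right ?_ (hobtuse i₀ j₀ (by rintro rfl; linarith))
    calc c i₀ * c j₀ < 0 := mul_neg_of_neg_of_pos hi₀ hj₀
      _ ≤ |c i₀| * |c j₀| := by positivity
  have hsq : ⟪∑ i, |c i| • b i, ∑ i, |c i| • b i⟫ < ⟪∑ i, c i • b i, ∑ i, c i • b i⟫ := by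
    rw [real_inner_self_sum_smul, real_inner_self_sum_smul]
    exact Finset.sum_lt_sum (fun i _ => Finset.sum_le_sum fun j _ => hle i j)
      ⟨i₀, Finset.mem_univ _, Finset.sum_lt_sum (fun j _ => hle i₀ j)
        ⟨j₀, Finset.mem_univ _, hlt⟩⟩
  rw [real_inner_self_eq_norm_sq, real_inner_self_eq_norm_sq] at hsq
  exact lt_of_pow_lt_pow_left₀ 2 (norm_nonneg _) hsq

end

theorem stmt_0_general (n : ℕ) (b : Fin n → EuclideanSpace ℝ (Fin n))
    (hli : LinearIndependent ℝ b)
    (hobtuse : ∀ i j : Fin n, i ≠ j → ⟪b i, b j⟫ < 0)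
    (v : Fin n → ℤ)
    (s : EuclideanSpace ℝ (Fin n)) (hs : s = ∑ i, (v i : ℝ) • b i)
    (hshort : ∀ u : Fin n → ℤ, (∑ i, (u i : ℝ) • b i) ≠ 0 →
      ‖s‖ ≤ ‖∑ i, (u i : ℝ) • b i‖) :
    (∀ i, 0 ≤ v i) ∨ (∀ i, v i ≤ 0) := by
  by_contra! ⟨⟨i₀, hi₀⟩, ⟨j₀, hj₀⟩⟩
  have habs_ne : (∑ i, ((|v i| : ℤ) : ℝ) • b i) ≠ 0 := by
    intro h
    have := Fintype.linearIndependent_iff.mp hli _ h j₀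
    rw [Int.cast_eq_zero, abs_eq_zero] at this
    omega
  have hlt := norm_sum_abs_smul_lt_of_obtuse b hobtuse (fun i => (v i : ℝ))
    (Int.cast_lt_zero.mpr hi₀) (Int.cast_pos.mpr hj₀)
  have hle := hshort (fun i => |v i|) habs_ne
  push_cast at hle
  rw [hs] at hle
  exact hle.not_gt hlt

theorem stmt_0 (n : ℕ) (b : Fin n → EuclideanSpace ℝ (Fin n))
    (hli : LinearIndependent ℝ b)
    (hobtuse : ∀ i j : Fin n, i ≠ j → ⟪b i, b j⟫ < 0)
    (v : Fin n → ℤ) (hv : v ≠ 0)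
    (s : EuclideanSpace ℝ (Fin n)) (hs : s = ∑ i, (v i : ℝ) • b i)
    (hshort : ∀ u : Fin n → ℤ, (∑ i, (u i : ℝ) • b i) ≠ 0 →
      ‖s‖ ≤ ‖∑ i, (u i : ℝ) • b i‖) :
    (∀ i, 0 ≤ v i) ∨ (∀ i, v i ≤ 0) :=
  stmt_0_general n b hli hobtuse v s hs hshort
end

section
/- Let b₁,…,bₙ be vectors in Euclidean n-space with ⟪bᵢ,bⱼ⟫ ≤ 0 for all i ≠ j. Then for any real coefficients v₁,…,vₙ one has ‖Σᵢ |vᵢ| bᵢ‖ ≤ ‖Σᵢ vᵢ bᵢ‖. -/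
/-! Expanding `‖∑ cᵢ bᵢ‖²` as `∑ᵢ ∑ⱼ cᵢ cⱼ ⟪bᵢ, bⱼ⟫`, the diagonal terms are the same for `c = v` and
`c = |v|`, while off the diagonal `|vᵢ| |vⱼ| ≥ vᵢ vⱼ` is multiplied by `⟪bᵢ, bⱼ⟫ ≤ 0`. -/

open scoped RealInnerProductSpace

section Obtuse

variable {ι E : Type*} [NormedAddCommGroup E] [InnerProductSpace ℝ E]

theorem real_inner_sum_smul_self [Fintype ι] (b : ι → E) (c : ι → ℝ) :
    ⟪∑ i, c i • b i, ∑ i, c i • b i⟫ = ∑ i, ∑ j, c i * c j * ⟪b i, b j⟫ := by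
  rw [sum_inner]
  simp only [real_inner_smul_left, inner_sum, real_inner_smul_right]
  exact Finset.sum_congr rfl fun _ _ => Finset.sum_congr rfl fun _ _ => by ring

theorem abs_mul_abs_mul_real_inner_le (b : ι → E) (hobtuse : Pairwise fun i j => ⟪b i, b j⟫ ≤ 0)
    (v : ι → ℝ) (i j : ι) : |v i| * |v j| * ⟪b i, b j⟫ ≤ v i * v j * ⟪b i, b j⟫ := by
  rcases eq_or_ne i j with rfl | hij
  · rw [abs_mul_abs_self]
  · refine mul_le_mul_of_nonpos_right ?_ (hobtuse hij)
    rw [← abs_mul]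
    exact le_abs_self _

theorem norm_sum_abs_smul_le_of_pairwise_inner_nonpos [Fintype ι] (b : ι → E)
    (hobtuse : Pairwise fun i j => ⟪b i, b j⟫ ≤ 0) (v : ι → ℝ) :
    ‖∑ i, |v i| • b i‖ ≤ ‖∑ i, v i • b i‖ := by
  rw [← sq_le_sq₀ (norm_nonneg _) (norm_nonneg _), ← real_inner_self_eq_norm_sq,
    ← real_inner_self_eq_norm_sq, real_inner_sum_smul_self, real_inner_sum_smul_self]
  exact Finset.sum_le_sum fun i _ => Finset.sum_le_sum fun j _ =>
    abs_mul_abs_mul_real_inner_le b hobtuse v i j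

end Obtuse

theorem stmt_1 (n : ℕ) (b : Fin n → EuclideanSpace ℝ (Fin n))
    (hobtuse : ∀ i j : Fin n, i ≠ j → ⟪b i, b j⟫ ≤ 0)
    (v : Fin n → ℝ) :
    ‖∑ i, |v i| • b i‖ ≤ ‖∑ i, v i • b i‖ :=
  norm_sum_abs_smul_le_of_pairwise_inner_nonpos b (fun i j => hobtuse i j) v
end

section
/- Let b₁,…,bₙ be linearly independent vectors in Euclidean n-space with ⟪bᵢ,bⱼ⟫ ≤ 0 for all i ≠ j, and suppose the lattice generated by b₁,…,bₙ possesses a shortest nonzero vector s. Then there exists a shortest nonzero lattice vector of the form Σᵢ uᵢbᵢ with all integer coefficients uᵢ ≥ 0 (namely, if s = Σᵢ vᵢbᵢ, the vector Σᵢ |vᵢ| bᵢ is also a shortest nonzero lattice vector). -/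
/-!
Expanding `‖∑ cᵢ bᵢ‖²` as `∑ᵢⱼ cᵢ cⱼ ⟪bᵢ, bⱼ⟫`, replacing every `cᵢ` by `|cᵢ|` leaves the diagonal
terms unchanged and can only decrease the off-diagonal ones, since there `cᵢ cⱼ ≤ |cᵢ| |cⱼ|` while
`⟪bᵢ, bⱼ⟫ ≤ 0`. So `∑ |vᵢ| bᵢ` is no longer than the shortest vector `s`, and by linear independence it
is nonzero.
-/

open scoped RealInnerProductSpace

section Obtuse

variable {ι E : Type*} [Fintype ι] [NormedAddCommGroup E] [InnerProductSpace ℝ E]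

lemma norm_sum_smul_sq (b : ι → E) (c : ι → ℝ) :
    ‖∑ i, c i • b i‖ ^ 2 = ∑ i, ∑ j, c i * c j * ⟪b i, b j⟫ := by
  rw [← real_inner_self_eq_norm_sq]
  simp only [sum_inner, inner_sum, real_inner_smul_left, real_inner_smul_right, mul_assoc]
  exact Finset.sum_congr rfl fun i _ => Finset.sum_congr rfl fun j _ => by rw [real_inner_comm]

lemma norm_sum_abs_smul_le_of_obtuse {b : ι → E} (hobtuse : ∀ i j, i ≠ j → ⟪b i, b j⟫ ≤ 0)
    (c : ι → ℝ) : ‖∑ i, |c i| • b i‖ ≤ ‖∑ i, c i • b i‖ := by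
  refine pow_le_pow_iff_left₀ (norm_nonneg _) (norm_nonneg _) two_ne_zero |>.mp ?_
  rw [norm_sum_smul_sq, norm_sum_smul_sq]
  refine Finset.sum_le_sum fun i _ => Finset.sum_le_sum fun j _ => ?_
  rcases eq_or_ne i j with rfl | hij
  · rw [abs_mul_abs_self]
  · rw [← abs_mul]
    exact mul_le_mul_of_nonpos_right (le_abs_self _) (hobtuse i j hij)

lemma sum_abs_smul_ne_zero {b : ι → E} (hli : LinearIndependent ℝ b) {c : ι → ℝ}
    (hc : ∑ i, c i • b i ≠ 0) : ∑ i, |c i| • b i ≠ 0 := by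
  intro h
  refine hc (Finset.sum_eq_zero fun i _ => ?_)
  rw [abs_eq_zero.mp (Fintype.linearIndependent_iff.mp hli _ h i), zero_smul]

end Obtuse

theorem stmt_2 (n : ℕ) (b : Fin n → EuclideanSpace ℝ (Fin n))
    (hli : LinearIndependent ℝ b)
    (hobtuse : ∀ i j : Fin n, i ≠ j → ⟪b i, b j⟫ ≤ 0)
    (v : Fin n → ℤ)
    (s : EuclideanSpace ℝ (Fin n)) (hs : s = ∑ i, (v i : ℝ) • b i)
    (hs0 : s ≠ 0)
    (hshort : ∀ u : Fin n → ℤ, (∑ i, (u i : ℝ) • b i) ≠ 0 →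
      ‖s‖ ≤ ‖∑ i, (u i : ℝ) • b i‖) :
    ∃ u : Fin n → ℤ, (∀ i, 0 ≤ u i) ∧ (∀ i, u i = |v i|) ∧
      (∑ i, (u i : ℝ) • b i) ≠ 0 ∧
      ∀ w : Fin n → ℤ, (∑ i, (w i : ℝ) • b i) ≠ 0 →
        ‖∑ i, (u i : ℝ) • b i‖ ≤ ‖∑ i, (w i : ℝ) • b i‖ := by
  subst hs
  refine ⟨fun i => |v i|, fun i => abs_nonneg _, fun i => rfl, ?_, fun w hw => ?_⟩
  · simpa only [Int.cast_abs] using sum_abs_smul_ne_zero hli hs0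
  · simpa only [Int.cast_abs] using (norm_sum_abs_smul_le_of_obtuse hobtuse _).trans (hshort w hw)
end

section
/- Let n be odd with binom(n,2) ≡ 1 (mod 4). Let w : Fin n → Fin n → ℝ be symmetric with w i j ≠ 0 for all i ≠ j, let x be the number of unordered pairs {i,j}, i ≠ j, with w i j < 0 and y the number of unordered pairs with w i j > 0, and suppose x − y ≡ −1 (mod 4) as integers. Then there is no sign assignment ε : Fin n → ℝ with ε i ∈ {−1, 1} for all i such that ε i · ε j · w i j < 0 for all i ≠ j. -/
/-!
Multiply all edge weights over the pairs `i < j`. Flipping the sign of `bᵢ` changes the sign of the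
`n - 1` edges at `i`, an even number, so every sign flip preserves the sign of this product. Before
flipping, the product has sign `(-1) ^ x`, and `x` is even because `x + y = (n choose 2) ≡ 1` and
`x - y ≡ -1 (mod 4)`; after a successful flip all `n choose 2` factors are negative, an odd number.
-/

open Finset

lemma Finset.card_filter_neg_add_card_filter_pos {ι R : Type*} [Zero R] [LinearOrder R]
    {s : Finset ι} {f : ι → R} (hf : ∀ i ∈ s, f i ≠ 0) :
    #{i ∈ s | f i < 0} + #{i ∈ s | 0 < f i} = #s := by
  rw [← card_filter_add_card_filter_not (s := s) (fun i => f i < 0)]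
  congr 2
  refine filter_congr fun i hi => ?_
  exact ⟨fun h => not_lt.2 h.le, fun h => (hf i hi).lt_or_gt.resolve_left h⟩

section Sign

variable {ι R : Type*} [CommRing R] [LinearOrder R] [IsStrictOrderedRing R]

lemma Finset.prod_eq_neg_one_pow_card_filter_neg_mul_prod_abs (s : Finset ι) (f : ι → R) :
    ∏ i ∈ s, f i = (-1) ^ #{i ∈ s | f i < 0} * ∏ i ∈ s, |f i| := by
  have hsplit : ∀ i, f i = (if f i < 0 then -1 else 1) * |f i| := by
    intro i
    split_ifs with h
    · rw [abs_of_neg h, neg_one_mul, neg_neg]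
    · rw [abs_of_nonneg (not_lt.1 h), one_mul]
  rw [prod_congr rfl fun i _ => hsplit i, prod_mul_distrib, prod_ite, prod_const, prod_const_one,
    mul_one]

lemma Finset.prod_pos_iff_even_card_filter_neg {s : Finset ι} {f : ι → R}
    (hf : ∀ i ∈ s, f i ≠ 0) : 0 < ∏ i ∈ s, f i ↔ Even #{i ∈ s | f i < 0} := by
  have habs : 0 < ∏ i ∈ s, |f i| := prod_pos fun i hi => abs_pos.2 (hf i hi)
  rw [prod_eq_neg_one_pow_card_filter_neg_mul_prod_abs, mul_pos_iff_of_pos_right habs]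
  rcases Nat.even_or_odd #{i ∈ s | f i < 0} with h | h
  · simp [h.neg_one_pow, h]
  · simp [h.neg_one_pow, Nat.not_even_iff_odd.2 h]

end Sign

section OrderedPairs

variable {α M : Type*} [Fintype α] [LinearOrder α] [CommMonoid M]

lemma Finset.card_filter_gt_add_card_filter_lt (i : α) :
    #{j | i < j} + #{j | j < i} = Fintype.card α - 1 := by
  have hle : ({j | ¬ i < j} : Finset α) = insert i ({j | j < i} : Finset α) := by
    ext j
    simp [le_iff_lt_or_eq, or_comm, eq_comm]
  have := card_filter_add_card_filter_not (s := univ) (fun j => i < j)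
  rw [hle, card_insert_of_notMem (by simp), card_univ] at this
  omega

lemma Finset.prod_filter_lt_fst (f : α → M) :
    ∏ p : α × α with p.1 < p.2, f p.1 = ∏ i, f i ^ #{j | i < j} := by
  rw [prod_filter, Fintype.prod_prod_type]
  refine prod_congr rfl fun i _ => ?_
  rw [← prod_filter]
  exact prod_const (f i)

lemma Finset.prod_filter_lt_snd (f : α → M) :
    ∏ p : α × α with p.1 < p.2, f p.2 = ∏ j, f j ^ #{i | i < j} := by
  rw [prod_filter, Fintype.prod_prod_type_right]
  refine prod_congr rfl fun j _ => ?_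
  rw [← prod_filter]
  exact prod_const (f j)

lemma Finset.prod_filter_lt_mul (f : α → M) :
    ∏ p : α × α with p.1 < p.2, f p.1 * f p.2 = ∏ i, f i ^ (Fintype.card α - 1) := by
  rw [prod_mul_distrib, prod_filter_lt_fst, prod_filter_lt_snd, ← prod_mul_distrib]
  simp_rw [← pow_add, card_filter_gt_add_card_filter_lt]

end OrderedPairs

lemma prod_filter_lt_sign_flip_eq {α R : Type*} [Fintype α] [LinearOrder α] [CommRing R]
    (hα : Odd (Fintype.card α)) {ε : α → R}
    (hε : ∀ i, ε i = -1 ∨ ε i = 1) (w : α → α → R) :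
    ∏ p : α × α with p.1 < p.2, ε p.1 * ε p.2 * w p.1 p.2 =
      ∏ p : α × α with p.1 < p.2, w p.1 p.2 := by
  have heven : Even (Fintype.card α - 1) := hα.tsub_odd odd_one
  have hflips : ∏ p : α × α with p.1 < p.2, ε p.1 * ε p.2 = 1 := by
    rw [prod_filter_lt_mul]
    refine prod_eq_one fun i _ => ?_
    rcases hε i with h | h <;> simp [h, heven.neg_one_pow]
  rw [prod_mul_distrib, hflips, one_mul]

theorem stmt_3_general (n : ℕ) (hodd : Odd n) (hchoose : n.choose 2 % 4 = 1)
    (w : Fin n → Fin n → ℝ)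
    (hne : ∀ i j : Fin n, i ≠ j → w i j ≠ 0)
    (x y : ℕ)
    (hx : x = (Finset.univ.filter
      (fun p : Fin n × Fin n => p.1 < p.2 ∧ w p.1 p.2 < 0)).card)
    (hy : y = (Finset.univ.filter
      (fun p : Fin n × Fin n => p.1 < p.2 ∧ 0 < w p.1 p.2)).card)
    (hmod : (x : ℤ) - (y : ℤ) ≡ -1 [ZMOD 4]) :
    ¬ ∃ ε : Fin n → ℝ, (∀ i, ε i = -1 ∨ ε i = 1) ∧
      ∀ i j : Fin n, i ≠ j → ε i * ε j * w i j < 0 := by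
  rintro ⟨ε, hε, hneg⟩
  set S : Finset (Fin n × Fin n) := {p | p.1 < p.2}
  have hS : #S = n.choose 2 := by simpa using Fintype.card_product_filter_lt (α := Fin n)
  have hwS : ∀ p ∈ S, w p.1 p.2 ≠ 0 := fun p hp => hne _ _ (mem_filter.1 hp).2.ne
  have hxy : x + y = n.choose 2 := by
    rw [hx, hy, ← hS, ← card_filter_neg_add_card_filter_pos hwS, filter_filter, filter_filter]
  have hx_even : Even x := by
    rw [Int.ModEq] at hmod
    rw [Nat.even_iff]
    omega
  have hpos : 0 < ∏ p ∈ S, w p.1 p.2 := by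
    rwa [prod_pos_iff_even_card_filter_neg hwS, filter_filter, ← hx]
  have hflipped_neg : ∀ p ∈ S, ε p.1 * ε p.2 * w p.1 p.2 < 0 :=
    fun p hp => hneg _ _ (mem_filter.1 hp).2.ne
  have hnot_pos : ¬ 0 < ∏ p ∈ S, ε p.1 * ε p.2 * w p.1 p.2 := by
    rw [prod_pos_iff_even_card_filter_neg fun p hp => (hflipped_neg p hp).ne,
      filter_true_of_mem hflipped_neg, hS, Nat.even_iff]
    omega
  exact hnot_pos (by rwa [prod_filter_lt_sign_flip_eq (by simpa using hodd) hε])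

theorem stmt_3 (n : ℕ) (hodd : Odd n) (hchoose : n.choose 2 % 4 = 1)
    (w : Fin n → Fin n → ℝ)
    (hsymm : ∀ i j, w i j = w j i)
    (hne : ∀ i j : Fin n, i ≠ j → w i j ≠ 0)
    (x y : ℕ)
    (hx : x = (Finset.univ.filter
      (fun p : Fin n × Fin n => p.1 < p.2 ∧ w p.1 p.2 < 0)).card)
    (hy : y = (Finset.univ.filter
      (fun p : Fin n × Fin n => p.1 < p.2 ∧ 0 < w p.1 p.2)).card)
    (hmod : (x : ℤ) - (y : ℤ) ≡ -1 [ZMOD 4]) :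
    ¬ ∃ ε : Fin n → ℝ, (∀ i, ε i = -1 ∨ ε i = 1) ∧
      ∀ i j : Fin n, i ≠ j → ε i * ε j * w i j < 0 :=
  stmt_3_general n hodd hchoose w hne x y hx hy hmod
end

section
/- Let n be odd and let w : Fin n → Fin n → ℝ be symmetric with w i j ≠ 0 for all i ≠ j. Fix a vertex k and define w' by w' i j = −(w i j) if k ∈ {i,j} and i ≠ j, and w' i j = w i j otherwise. Let x, y (respectively x', y') denote the number of unordered pairs {i,j}, i ≠ j, with negative, respectively positive, weight under w (respectively w'). Then x' − y' ≡ x − y (mod 4). -/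
/-!
Counting negative minus positive edges is minus the sum of the signs of the edge weights.
Flipping vertex `k` negates the signs of the `n - 1` edges at `k`, which changes that sum by
`-2` times a sum of `n - 1` terms `±1`; as `n - 1` is even, this sum is even, so the change is
divisible by `4`.
-/

open Finset

theorem card_filter_lt_and_incident {ι : Type*} [Fintype ι] [LinearOrder ι] (k : ι) :
    #{q : ι × ι | q.1 < q.2 ∧ (q.1 = k ∨ q.2 = k)} = Fintype.card ι - 1 := by
  rw [show Fintype.card ι - 1 = #({k}ᶜ : Finset ι) by rw [card_compl, card_singleton]]
  refine card_nbij' (fun q => if q.1 = k then q.2 else q.1) (fun m => (min k m, max k m))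
    ?_ ?_ ?_ ?_ <;> intro q <;>
    simp only [coe_filter, coe_compl, coe_singleton, mem_univ, true_and, Set.mem_ofPred_eq,
      Set.mem_compl_iff, Set.mem_singleton_iff] <;> grind

theorem sum_sign_eq_card_filter_pos_sub_card_filter_neg {α : Type*} (s : Finset α)
    (f : α → ℝ) :
    ∑ a ∈ s, (SignType.sign (f a) : ℤ) = #{a ∈ s | 0 < f a} - #{a ∈ s | f a < 0} := by
  have hsign : ∀ a, (SignType.sign (f a) : ℤ) =
      (if 0 < f a then 1 else 0) - (if f a < 0 then 1 else 0) := fun a => by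
    rw [sign_apply]
    split_ifs <;> first | rfl | linarith
  simp only [hsign, sum_sub_distrib, sum_boole]

theorem sum_sign_modEq_card {α : Type*} (s : Finset α) (f : α → ℝ)
    (hf : ∀ a ∈ s, f a ≠ 0) :
    ∑ a ∈ s, (SignType.sign (f a) : ℤ) ≡ #s [ZMOD 2] := by
  rw [card_eq_sum_ones, Nat.cast_sum, Nat.cast_one]
  refine Int.ModEq.sum fun a ha => ?_
  rcases (hf a ha).lt_or_gt with h | h
  · rw [sign_neg h]; decide
  · rw [sign_pos h]; rfl

theorem sum_sign_ite_neg {α : Type*} (s : Finset α) (p : α → Prop) [DecidablePred p]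
    (f : α → ℝ) :
    ∑ a ∈ s, (SignType.sign (if p a then -f a else f a) : ℤ) =
      ∑ a ∈ s, (SignType.sign (f a) : ℤ) -
        2 * ∑ a ∈ s with p a, (SignType.sign (f a) : ℤ) := by
  rw [sum_filter, mul_sum, ← sum_sub_distrib]
  refine sum_congr rfl fun a _ => ?_
  split_ifs
  · rw [Left.sign_neg, SignType.coe_neg]; ring
  · rw [mul_zero, sub_zero]

theorem sum_sign_ite_neg_modEq {α : Type*} (s : Finset α) (p : α → Prop) [DecidablePred p]
    (f : α → ℝ) (hf : ∀ a ∈ s, p a → f a ≠ 0) (hp : Even #{a ∈ s | p a}) :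
    ∑ a ∈ s, (SignType.sign (if p a then -f a else f a) : ℤ) ≡
      ∑ a ∈ s, (SignType.sign (f a) : ℤ) [ZMOD 4] := by
  have hflipped : 2 ∣ ∑ a ∈ s with p a, (SignType.sign (f a) : ℤ) := by
    have hparity := (sum_sign_modEq_card _ f fun a ha =>
      hf a (mem_filter.mp ha).1 (mem_filter.mp ha).2).symm.dvd
    have hcard : (2 : ℤ) ∣ #{a ∈ s | p a} := by exact_mod_cast hp.two_dvd
    simpa using dvd_add hparity hcard
  rw [sum_sign_ite_neg, Int.modEq_iff_dvd, sub_sub_cancel, show (4 : ℤ) = 2 * 2 by norm_num]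
  exact mul_dvd_mul_left 2 hflipped

theorem stmt_4_general (n : ℕ) (hodd : Odd n)
    (w : Fin n → Fin n → ℝ)
    (hne : ∀ i j : Fin n, i ≠ j → w i j ≠ 0)
    (k : Fin n)
    (w' : Fin n → Fin n → ℝ)
    (hw' : ∀ i j : Fin n,
      w' i j = if (i = k ∨ j = k) ∧ i ≠ j then -(w i j) else w i j)
    (x y x' y' : ℕ)
    (hx : x = (Finset.univ.filter
      (fun p : Fin n × Fin n => p.1 < p.2 ∧ w p.1 p.2 < 0)).card)
    (hy : y = (Finset.univ.filter
      (fun p : Fin n × Fin n => p.1 < p.2 ∧ 0 < w p.1 p.2)).card)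
    (hx' : x' = (Finset.univ.filter
      (fun p : Fin n × Fin n => p.1 < p.2 ∧ w' p.1 p.2 < 0)).card)
    (hy' : y' = (Finset.univ.filter
      (fun p : Fin n × Fin n => p.1 < p.2 ∧ 0 < w' p.1 p.2)).card) :
    (x' : ℤ) - (y' : ℤ) ≡ (x : ℤ) - (y : ℤ) [ZMOD 4] := by
  have hsign_sum : ∀ v : Fin n → Fin n → ℝ,
      (#{q : Fin n × Fin n | q.1 < q.2 ∧ v q.1 q.2 < 0} : ℤ) -
        #{q : Fin n × Fin n | q.1 < q.2 ∧ 0 < v q.1 q.2} =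
      -∑ q : Fin n × Fin n with q.1 < q.2, (SignType.sign (v q.1 q.2) : ℤ) := fun v => by
    rw [sum_sign_eq_card_filter_pos_sub_card_filter_neg, filter_filter, filter_filter]
    ring
  have hw'_flip : ∑ q : Fin n × Fin n with q.1 < q.2, (SignType.sign (w' q.1 q.2) : ℤ) =
      ∑ q : Fin n × Fin n with q.1 < q.2,
        (SignType.sign (if q.1 = k ∨ q.2 = k then -w q.1 q.2 else w q.1 q.2) : ℤ) :=
    sum_congr rfl fun q hq => by
      simp only [hw', (mem_filter.mp hq).2.ne, ne_eq, not_false_eq_true, and_true]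
  have hincident :
      Even #{q ∈ ({q | q.1 < q.2} : Finset (Fin n × Fin n)) | q.1 = k ∨ q.2 = k} := by
    rw [filter_filter, card_filter_lt_and_incident, Fintype.card_fin]
    exact Nat.Odd.sub_odd hodd odd_one
  subst hx hy hx' hy'
  rw [hsign_sum, hsign_sum, hw'_flip]
  exact (sum_sign_ite_neg_modEq _ _ _
    (fun q hq _ => hne _ _ (mem_filter.mp hq).2.ne) hincident).neg

theorem stmt_4 (n : ℕ) (hodd : Odd n)
    (w : Fin n → Fin n → ℝ)
    (hsymm : ∀ i j, w i j = w j i)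
    (hne : ∀ i j : Fin n, i ≠ j → w i j ≠ 0)
    (k : Fin n)
    (w' : Fin n → Fin n → ℝ)
    (hw' : ∀ i j : Fin n,
      w' i j = if (i = k ∨ j = k) ∧ i ≠ j then -(w i j) else w i j)
    (x y x' y' : ℕ)
    (hx : x = (Finset.univ.filter
      (fun p : Fin n × Fin n => p.1 < p.2 ∧ w p.1 p.2 < 0)).card)
    (hy : y = (Finset.univ.filter
      (fun p : Fin n × Fin n => p.1 < p.2 ∧ 0 < w p.1 p.2)).card)
    (hx' : x' = (Finset.univ.filter
      (fun p : Fin n × Fin n => p.1 < p.2 ∧ w' p.1 p.2 < 0)).card)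
    (hy' : y' = (Finset.univ.filter
      (fun p : Fin n × Fin n => p.1 < p.2 ∧ 0 < w' p.1 p.2)).card) :
    (x' : ℤ) - (y' : ℤ) ≡ (x : ℤ) - (y : ℤ) [ZMOD 4] :=
  stmt_4_general n hodd w hne k w' hw' x y x' y' hx hy hx' hy'
end

section
/- Let A be a real symmetric positive definite n×n matrix whose off-diagonal entries satisfy A i j ≤ 0 for all i ≠ j (an M-matrix). Then A is invertible and every entry of A⁻¹ is nonnegative. -/
/-!
If `A *ᵥ x ≥ 0`, split `x = x⁺ - x⁻`. Since `x⁺` and `x⁻` have disjoint supports, only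
off-diagonal entries of `A` enter `x⁻ ⬝ᵥ A *ᵥ x⁺`, so it is `≤ 0`; hence
`0 ≤ x⁻ ⬝ᵥ A *ᵥ x ≤ -(x⁻ ⬝ᵥ A *ᵥ x⁻)`, and positive definiteness forces `x⁻ = 0`.
Applied to the columns `x = A⁻¹ *ᵥ Pi.single j 1`, this gives `A⁻¹ ≥ 0`.
-/

open Matrix

namespace Matrix

variable {ι : Type*} [Fintype ι]

theorem dotProduct_mulVec_nonpos_of_offDiag_nonpos {R : Type*} [CommRing R] [PartialOrder R]
    [IsOrderedRing R] {A : Matrix ι ι R} (hA : ∀ i j, i ≠ j → A i j ≤ 0) {u v : ι → R}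
    (hu : 0 ≤ u) (hv : 0 ≤ v) (huv : ∀ k, u k * v k = 0) : u ⬝ᵥ (A *ᵥ v) ≤ 0 := by
  simp only [dotProduct, mulVec, Finset.mul_sum]
  refine Finset.sum_nonpos fun a _ => Finset.sum_nonpos fun b _ => ?_
  rcases eq_or_ne a b with rfl | hab
  · rw [mul_left_comm, huv, mul_zero]
  · exact mul_nonpos_of_nonneg_of_nonpos (hu a) (mul_nonpos_of_nonpos_of_nonneg (hA a b hab) (hv b))

theorem nonneg_of_mulVec_nonneg {A : Matrix ι ι ℝ} (hPD : A.PosDef)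
    (hA : ∀ i j, i ≠ j → A i j ≤ 0) {x : ι → ℝ} (hx : 0 ≤ A *ᵥ x) : 0 ≤ x := by
  have hcross : x⁻ ⬝ᵥ (A *ᵥ x⁺) ≤ 0 :=
    dotProduct_mulVec_nonpos_of_offDiag_nonpos hA (negPart_nonneg x) (posPart_nonneg x)
      fun k => by rcases le_total (x k) 0 with h | h <;> simp [h]
  have hsplit : A *ᵥ x = A *ᵥ x⁺ - A *ᵥ x⁻ := by rw [← mulVec_sub, posPart_sub_negPart]
  have hquad : x⁻ ⬝ᵥ (A *ᵥ x⁻) ≤ 0 := by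
    have := dotProduct_nonneg_of_nonneg (negPart_nonneg x) hx
    rw [hsplit, dotProduct_sub] at this
    linarith
  have hneg : x⁻ = 0 := by
    by_contra h
    exact hquad.not_gt (by simpa using hPD.dotProduct_mulVec_pos h)
  exact negPart_eq_zero.1 hneg

theorem nonneg_inv_of_posDef_of_offDiag_nonpos [DecidableEq ι] {A : Matrix ι ι ℝ}
    (hPD : A.PosDef) (hA : ∀ i j, i ≠ j → A i j ≤ 0) (i j : ι) : 0 ≤ A⁻¹ i j := by
  have hcol : A *ᵥ (A⁻¹ *ᵥ Pi.single j 1) = Pi.single j 1 := by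
    rw [mulVec_mulVec, mul_nonsing_inv _ ((isUnit_iff_isUnit_det A).1 hPD.isUnit), one_mulVec]
  have := nonneg_of_mulVec_nonneg hPD hA (hcol ▸ Pi.single_nonneg.2 zero_le_one)
  simpa [mulVec_single_one] using this i

end Matrix

theorem stmt_10_general (n : ℕ) (A : Matrix (Fin n) (Fin n) ℝ)
    (hposdef : A.PosDef)
    (hoffdiag : ∀ i j : Fin n, i ≠ j → A i j ≤ 0) :
    IsUnit A.det ∧ ∀ i j, 0 ≤ A⁻¹ i j :=
  ⟨(isUnit_iff_isUnit_det A).1 hposdef.isUnit, nonneg_inv_of_posDef_of_offDiag_nonpos hposdef hoffdiag⟩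

theorem stmt_10 (n : ℕ) (A : Matrix (Fin n) (Fin n) ℝ)
    (hsymm : A.IsSymm) (hposdef : A.PosDef)
    (hoffdiag : ∀ i j : Fin n, i ≠ j → A i j ≤ 0) :
    IsUnit A.det ∧ ∀ i j, 0 ≤ A⁻¹ i j :=
  stmt_10_general n A hposdef hoffdiag
end

section
/- Let b₁,…,b_d be linearly independent vectors in Euclidean n-space such that ⟪bᵢ,bⱼ⟫ ≤ 0 for all i ≠ j with i, j ≤ d−1. Then there exist integers v₁,…,v_{d−1} and a nonzero integer y such that the vector b' = y·b_d + Σ_{i<d} vᵢ·bᵢ satisfies ⟪b', bᵢ⟫ ≤ 0 for every i ≤ d−1. -/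
/-!
Since `b₁, …, b_{d-1}` are linearly independent, their Gram matrix is invertible, so there are
real `cⱼ` with `⟪b_d + ∑ cⱼ bⱼ, bᵢ⟫ = -1` for all `i`. Scaling by an integer `y` larger than the
sum `M` of the absolute entries of the Gram matrix and rounding the coefficients `y cⱼ` moves each
inner product by at most `M`, which the margin `-y` absorbs.
-/

open scoped RealInnerProductSpace

section

variable {E ι : Type*} [NormedAddCommGroup E] [InnerProductSpace ℝ E] [Fintype ι]

theorem LinearIndependent.exists_inner_sum_smul_eq {v : ι → E} (hv : LinearIndependent ℝ v)
    (t : ι → ℝ) : ∃ c : ι → ℝ, ∀ i, ⟪∑ j, c j • v j, v i⟫ = t i := by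
  classical
  obtain ⟨c, hc⟩ := Matrix.mulVec_surjective_iff_isUnit.2
    (Matrix.posDef_gram_of_linearIndependent hv).isUnit t
  refine ⟨c, fun i => ?_⟩
  rw [← hc, real_inner_comm, inner_sum]
  simp only [real_inner_smul_right, Matrix.mulVec, dotProduct, Matrix.gram_apply, mul_comm]

theorem inner_sum_round_sub_smul_le (v : ι → E) (c : ι → ℝ) (u : E) :
    ⟪∑ j, ((round (c j) : ℝ) - c j) • v j, u⟫ ≤ ∑ j, |⟪v j, u⟫| := by
  rw [sum_inner]
  refine Finset.sum_le_sum fun j _ => ?_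
  have hround : |(round (c j) : ℝ) - c j| ≤ 1 := by
    rw [abs_sub_comm]
    exact (abs_sub_round _).trans (by norm_num)
  calc ⟪((round (c j) : ℝ) - c j) • v j, u⟫
      ≤ |(round (c j) : ℝ) - c j| * |⟪v j, u⟫| := by
        rw [real_inner_smul_left, ← abs_mul]; exact le_abs_self _
    _ ≤ |⟪v j, u⟫| := mul_le_of_le_one_left (abs_nonneg _) hround

theorem LinearIndependent.exists_int_smul_add_sum_inner_neg {v : ι → E}
    (hv : LinearIndependent ℝ v) (x : E) :
    ∃ (k : ι → ℤ) (y : ℤ), 0 < y ∧ ∀ i, ⟪(y : ℝ) • x + ∑ j, (k j : ℝ) • v j, v i⟫ < 0 := by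
  obtain ⟨c, hc⟩ := hv.exists_inner_sum_smul_eq fun i => -1 - ⟪x, v i⟫
  set M : ℝ := ∑ i, ∑ j, |⟪v j, v i⟫|
  set y : ℤ := ⌈M⌉₊ + 1
  have hMy : M < y := by
    have := Nat.le_ceil M
    push_cast [y]
    linarith
  refine ⟨fun j => round ((y : ℝ) * c j), y, by positivity, fun i => ?_⟩
  have hrow : ∑ j, |⟪v j, v i⟫| ≤ M :=
    Finset.single_le_sum (f := fun i => ∑ j, |⟪v j, v i⟫|)
      (fun i _ => Finset.sum_nonneg fun j _ => abs_nonneg _) (Finset.mem_univ i)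
  have hsplit : (y : ℝ) • x + ∑ j, (round ((y : ℝ) * c j) : ℝ) • v j
      = (y : ℝ) • (x + ∑ j, c j • v j)
        + ∑ j, ((round ((y : ℝ) * c j) : ℝ) - (y : ℝ) * c j) • v j := by
    simp only [smul_add, Finset.smul_sum, smul_smul, sub_smul, Finset.sum_sub_distrib]
    abel
  have herr := inner_sum_round_sub_smul_le v (fun j => (y : ℝ) * c j) (v i)
  rw [hsplit, inner_add_left, real_inner_smul_left, inner_add_left, hc]
  linarith

end

theorem stmt_11_general (n d : ℕ) (b : Fin (d + 1) → EuclideanSpace ℝ (Fin n))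
    (hli : LinearIndependent ℝ b) :
    ∃ (v : Fin d → ℤ) (y : ℤ), y ≠ 0 ∧
      ∀ i : Fin d,
        ⟪(y : ℝ) • b (Fin.last d) + ∑ j, (v j : ℝ) • b j.castSucc,
          b i.castSucc⟫ ≤ 0 := by
  obtain ⟨v, y, hy, hneg⟩ :=
    (hli.comp _ (Fin.castSucc_injective d)).exists_int_smul_add_sum_inner_neg (b (Fin.last d))
  exact ⟨v, y, hy.ne', fun i => (hneg i).le⟩

theorem stmt_11 (n d : ℕ) (b : Fin (d + 1) → EuclideanSpace ℝ (Fin n))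
    (hli : LinearIndependent ℝ b)
    (hobtuse : ∀ i j : Fin d, i ≠ j → ⟪b i.castSucc, b j.castSucc⟫ ≤ 0) :
    ∃ (v : Fin d → ℤ) (y : ℤ), y ≠ 0 ∧
      ∀ i : Fin d,
        ⟪(y : ℝ) • b (Fin.last d) + ∑ j, (v j : ℝ) • b j.castSucc,
          b i.castSucc⟫ ≤ 0 :=
  stmt_11_general n d b hli
end

section
/- Let b₁,…,bₙ be linearly independent vectors in Euclidean n-space and let Λ = {Σᵢ vᵢbᵢ : vᵢ ∈ ℤ} be the lattice they generate. Then there exist n linearly independent vectors b'₁,…,b'ₙ ∈ Λ with ⟪b'ᵢ, b'ⱼ⟫ ≤ 0 for all i ≠ j; that is, Λ contains an obtuse basis of a full-rank sublattice. -/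
/-!
Induct on the number of vectors, proving the strict inequality `⟪b'ᵢ, b'ⱼ⟫ < 0`. With `v = b₀`,
project the remaining `bⱼ` onto `vᗮ`; by induction the projections have strictly obtuse,
independent integer combinations `cᵢ`, each lying in `Λ + ℝ v`. For a large integer `M`, shifting
`M cᵢ` by some `σᵢ v` with `σᵢ ∈ [-1, 0)` lands in `Λ`, and together with `v` these vectors work:
`⟪v, M cᵢ + σᵢ v⟫ = σᵢ ‖v‖² < 0` and
`⟪M cᵢ + σᵢ v, M cⱼ + σⱼ v⟫ = M² ⟪cᵢ, cⱼ⟫ + σᵢ σⱼ ‖v‖² ≤ M² ⟪cᵢ, cⱼ⟫ + ‖v‖² < 0`.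
-/

open scoped RealInnerProductSpace

open Filter Set Submodule

theorem linearIndependent_finCons_iff_of_sub_mem {K V : Type*} [Field K] [AddCommGroup V]
    [Module K V] {n : ℕ} {x : V} {f g : Fin n → V} (hfg : ∀ i, g i - f i ∈ K ∙ x) :
    LinearIndependent K (Fin.cons x f : Fin (n + 1) → V) ↔
      LinearIndependent K (Fin.cons x g : Fin (n + 1) → V) := by
  have span_le {f g : Fin n → V} (hfg : ∀ i, g i - f i ∈ K ∙ x) :
      K ∙ x ⊔ span K (range g) ≤ K ∙ x ⊔ span K (range f) :=
    sup_le le_sup_left <| span_le.2 <| range_subset_iff.2 fun i => by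
      simpa using add_mem (mem_sup_left (hfg i))
        (mem_sup_right (subset_span (mem_range_self (f := f) i)))
  have hspan : span K (range (Fin.cons x f : Fin (n + 1) → V)) =
      span K (range (Fin.cons x g : Fin (n + 1) → V)) := by
    simp only [Fin.range_cons, span_insert]
    exact le_antisymm (span_le fun i => by simpa using neg_mem (hfg i)) (span_le hfg)
  rw [linearIndependent_iff_card_eq_finrank_span, linearIndependent_iff_card_eq_finrank_span,
    Set.finrank, Set.finrank, hspan]

theorem exists_add_smul_mem_of_mem_sup_span_singleton {V : Type*} [AddCommGroup V] [Module ℝ V]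
    {L : Submodule ℤ V} {v x : V} (hv : v ∈ L) (hx : x ∈ L ⊔ (ℝ ∙ v).restrictScalars ℤ) :
    ∃ σ ∈ Ico (-1 : ℝ) 0, x + σ • v ∈ L := by
  obtain ⟨y, hy, z, hz, rfl⟩ := mem_sup.1 hx
  obtain ⟨t, rfl⟩ := mem_span_singleton.1 hz
  refine ⟨⌈t⌉ - 1 - t, ⟨?_, ?_⟩, ?_⟩
  · linarith [Int.le_ceil t]
  · linarith [Int.ceil_lt_add_one t]
  · have hk : ((⌈t⌉ - 1 : ℤ) : ℝ) • v ∈ L := by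
      rw [Int.cast_smul_eq_zsmul]; exact zsmul_mem hv _
    convert add_mem hy hk using 1
    push_cast
    module

variable {E : Type*} [NormedAddCommGroup E] [InnerProductSpace ℝ E]

theorem linearIndependent_finCons_of_inner_eq_zero {n : ℕ} {x : E} {f : Fin n → E} (hx : x ≠ 0)
    (hxf : ∀ i, ⟪x, f i⟫ = 0) (hf : LinearIndependent ℝ f) :
    LinearIndependent ℝ (Fin.cons x f : Fin (n + 1) → E) := by
  refine hf.finCons fun hmem => hx ?_
  have : span ℝ (range f) ≤ (ℝ ∙ x)ᗮ :=
    span_le.2 <| range_subset_iff.2 fun i => mem_orthogonal_singleton_iff_inner_right.2 (hxf i)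
  exact inner_self_eq_zero.1 (mem_orthogonal_singleton_iff_inner_right.1 (this hmem))

theorem eventually_sq_mul_add_neg {a : ℝ} (ha : a < 0) (C : ℝ) :
    ∀ᶠ M : ℕ in atTop, (M : ℝ) ^ 2 * a + C < 0 := by
  have : Tendsto (fun M : ℕ => (M : ℝ) ^ 2 * -a) atTop atTop :=
    ((tendsto_pow_atTop two_ne_zero).comp tendsto_natCast_atTop_atTop).atTop_mul_const
      (neg_pos.2 ha)
  filter_upwards [this.eventually_gt_atTop C] with M hM
  linarith

theorem inner_smul_add_smul_eq_of_inner_eq_zero {v c d : E} (hc : ⟪v, c⟫ = 0) (hd : ⟪v, d⟫ = 0)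
    (M s t : ℝ) : ⟪M • c + s • v, M • d + t • v⟫ = M ^ 2 * ⟪c, d⟫ + s * t * ⟪v, v⟫ := by
  rw [real_inner_comm] at hc
  simp only [inner_add_left, inner_add_right, real_inner_smul_left, real_inner_smul_right, hc, hd]
  ring

theorem exists_finCons_pairwise_inner_neg (L : Submodule ℤ E) {m : ℕ} {v : E} (hv0 : v ≠ 0)
    (hvL : v ∈ L) {c : Fin m → E} (hcL : ∀ i, c i ∈ L ⊔ (ℝ ∙ v).restrictScalars ℤ)
    (hcv : ∀ i, ⟪v, c i⟫ = 0) (hc : LinearIndependent ℝ c)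
    (hobtuse : Pairwise fun i j => ⟪c i, c j⟫ < 0) :
    ∃ w : Fin (m + 1) → E, (∀ i, w i ∈ L) ∧ LinearIndependent ℝ w ∧
      Pairwise fun i j => ⟪w i, w j⟫ < 0 := by
  have hvv : 0 < ⟪v, v⟫ := real_inner_self_pos.2 hv0
  -- The scale `M` is chosen before the shifts `σ`, which depend on it but stay in `[-1, 0)`.
  have hM : ∀ᶠ M : ℕ in atTop, 0 < M ∧ ∀ i j, i ≠ j → (M : ℝ) ^ 2 * ⟪c i, c j⟫ + ⟪v, v⟫ < 0 := by
    refine (eventually_gt_atTop 0).and (eventually_all.2 fun i => eventually_all.2 fun j => ?_)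
    rcases eq_or_ne i j with rfl | hij
    · exact .of_forall fun _ h => absurd rfl h
    · exact (eventually_sq_mul_add_neg (hobtuse hij) _).mono fun _ h _ => h
  obtain ⟨M, hM0, hMc⟩ := hM.exists
  have hMcL (i : Fin m) : (M : ℝ) • c i ∈ L ⊔ (ℝ ∙ v).restrictScalars ℤ := by
    rw [Nat.cast_smul_eq_nsmul]; exact nsmul_mem (hcL i) M
  choose σ hσ hσL using fun i => exists_add_smul_mem_of_mem_sup_span_singleton hvL (hMcL i)
  refine ⟨Fin.cons v fun i => (M : ℝ) • c i + σ i • v, Fin.cases hvL hσL, ?_, ?_⟩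
  · refine (linearIndependent_finCons_iff_of_sub_mem (f := fun i => (M : ℝ) • c i)
      fun i => by simpa using smul_mem _ (σ i) (mem_span_singleton_self v)).1 ?_
    exact linearIndependent_finCons_of_inner_eq_zero hv0 (fun i => by simp [inner_smul_right, hcv])
      (hc.units_smul fun _ => Units.mk0 (M : ℝ) (Nat.cast_ne_zero.2 hM0.ne'))
  · have hv_w (j : Fin m) : ⟪v, (M : ℝ) • c j + σ j • v⟫ < 0 := by
      rw [inner_add_right, real_inner_smul_right, real_inner_smul_right, hcv, mul_zero, zero_add]
      exact mul_neg_of_neg_of_pos (hσ j).2 hvv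
    intro i j hij
    cases i using Fin.cases with
    | zero =>
      cases j using Fin.cases with
      | zero => exact absurd rfl hij
      | succ j => exact hv_w j
    | succ i =>
      cases j using Fin.cases with
      | zero => rw [real_inner_comm]; exact hv_w i
      | succ j =>
        have hij : i ≠ j := fun h => hij (congrArg Fin.succ h)
        obtain ⟨hσi, -⟩ := hσ i
        obtain ⟨hσj, hσj'⟩ := hσ j
        have hσσ : σ i * σ j ≤ 1 := by
          nlinarith [mul_nonneg (by linarith : 0 ≤ σ i + 1) (by linarith : 0 ≤ -σ j)]
        simp only [Fin.cons_succ]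
        rw [inner_smul_add_smul_eq_of_inner_eq_zero (hcv i) (hcv j)]
        nlinarith [hMc i j hij]

theorem exists_linearIndependent_pairwise_inner_neg {m : ℕ} (b : Fin m → E)
    (hb : LinearIndependent ℝ b) :
    ∃ b' : Fin m → E, (∀ i, b' i ∈ span ℤ (range b)) ∧ LinearIndependent ℝ b' ∧
      Pairwise fun i j => ⟪b' i, b' j⟫ < 0 := by
  induction m with
  | zero => exact ⟨b, finZeroElim, hb, fun i => i.elim0⟩
  | succ m ih =>
    set v := b 0
    set c : Fin m → E := fun j => b j.succ - (ℝ ∙ v).starProjection (b j.succ)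
    have hcv (j : Fin m) : c j ∈ (ℝ ∙ v)ᗮ := sub_starProjection_mem_orthogonal _
    have hc : LinearIndependent ℝ c := by
      rw [← Fin.cons_self_tail b, linearIndependent_finCons_iff_of_sub_mem (g := c)
        fun j => by
          simp only [c, Fin.tail, sub_sub_cancel_left, neg_mem_iff]
          exact starProjection_apply_mem _ _] at hb
      exact (linearIndependent_finCons.1 hb).1
    obtain ⟨c', hc'c, hc', hobtuse⟩ := ih c hc
    have hspan_c : span ℤ (range c) ≤ span ℤ (range b) ⊔ (ℝ ∙ v).restrictScalars ℤ :=
      span_le.2 <| range_subset_iff.2 fun j =>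
        sub_mem (mem_sup_left (subset_span (mem_range_self _)))
          (mem_sup_right (starProjection_apply_mem _ _))
    have hspan_c_perp : span ℤ (range c) ≤ (ℝ ∙ v)ᗮ.restrictScalars ℤ :=
      span_le.2 <| range_subset_iff.2 hcv
    exact exists_finCons_pairwise_inner_neg _ (hb.ne_zero 0) (subset_span (mem_range_self 0))
      (fun i => hspan_c (hc'c i))
      (fun i => mem_orthogonal_singleton_iff_inner_right.1 (hspan_c_perp (hc'c i))) hc' hobtuse

theorem stmt_12 (n : ℕ) (b : Fin n → EuclideanSpace ℝ (Fin n))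
    (hli : LinearIndependent ℝ b) :
    ∃ b' : Fin n → EuclideanSpace ℝ (Fin n),
      (∀ i, ∃ u : Fin n → ℤ, b' i = ∑ j, (u j : ℝ) • b j) ∧
      LinearIndependent ℝ b' ∧
      ∀ i j : Fin n, i ≠ j → ⟪b' i, b' j⟫ ≤ 0 := by
  obtain ⟨b', hb'Λ, hb', hobtuse⟩ := exists_linearIndependent_pairwise_inner_neg b hli
  refine ⟨b', fun i => ?_, hb', fun i j hij => (hobtuse hij).le⟩
  obtain ⟨u, hu⟩ := (mem_span_range_iff_exists_fun ℤ).1 (hb'Λ i)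
  exact ⟨u, by simp only [Int.cast_smul_eq_zsmul, hu]⟩
end
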